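/- Let c > 0 and α ∈ (0,1]. Let g : ℝ → ℂ be infinitely differentiable with ∫_ℝ |g^{(k)}(x)|² dx < ∞ for every integer k ≥ 0, and suppose g( ± c·(log(1+n))^α ) = 0 for every integer n ≥ 0. Then for every N > 0 there exists C_N > 0 such that |g(x)| ≤ C_N e^{−N|x|} for all x ∈ ℝ. -/

import Mathlib

open MeasureTheory
open scoped ContDiff NNReal

/-- Iterated Rolle / interpolation bound: if `h` vanishes at `m` points,
all lying in `[x, b]`, and `|h^(m)| ≤ M` everywhere, then `|h x| ≤ M * (b-x)^m`. -/
lemma interp_bound : ∀ (m : ℕ) (h : ℝ → ℝ), ContDiff ℝ ∞ h → ∀ (M : ℝ),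
    (∀ y, |iteratedDeriv m h y| ≤ M) → ∀ (t : Fin m → ℝ), StrictMono t →
    (∀ i, h (t i) = 0) → ∀ (b x : ℝ), (∀ i, x ≤ t i ∧ t i ≤ b) → x ≤ b →
    |h x| ≤ M * (b - x) ^ m := by
  intro m
  induction m with
  | zero =>
    intro h _ M hM t _ _ b x _ _
    simpa using hM x
  | succ m ih =>
    intro h hh M hM t ht hz b x htx hxb
    have hM0 : 0 ≤ M := le_trans (abs_nonneg _) (hM 0)
    have hd : Differentiable ℝ h := hh.differentiable (by simp)
    have rolle : ∀ i : Fin m, ∃ s, s ∈ Set.Ioo (t i.castSucc) (t i.succ) ∧ deriv h s = 0 := by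
      intro i
      have hab : t i.castSucc < t i.succ := ht Fin.castSucc_lt_succ
      exact exists_deriv_eq_zero hab hh.continuous.continuousOn (by rw [hz, hz])
    choose s hs hds using rolle
    have hs_lt : ∀ i : Fin m, t i.castSucc < s i ∧ s i < t i.succ := fun i => ⟨(hs i).1, (hs i).2⟩
    -- the derivative bound on [x, t 0]
    have hdc : ContDiff ℝ ∞ (deriv h) := (contDiff_infty_iff_deriv.mp hh).2
    have hM' : ∀ y, |iteratedDeriv m (deriv h) y| ≤ M := by
      intro y; rw [← iteratedDeriv_succ']; exact hM y
    have hz' : ∀ i, deriv h (s i) = 0 := hds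
    have hsmono : StrictMono s := by
      intro i j hij
      have h1 : s i < t i.succ := (hs_lt i).2
      have h2 : t j.castSucc < s j := (hs_lt j).1
      have h3 : (i.succ : Fin (m+1)) ≤ j.castSucc := by
        rw [Fin.le_def]; simpa using hij
      exact lt_of_lt_of_le h1 (le_trans (ht.monotone h3) h2.le)
    have ha0 : x ≤ t 0 := (htx 0).1
    have hab : t 0 ≤ b := (htx 0).2
    have hder_bd : ∀ y ∈ Set.uIcc x (t 0), |deriv h y| ≤ M * (b - x) ^ m := by
      intro y hy
      rw [Set.uIcc_of_le ha0] at hy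
      obtain ⟨hy1, hy2⟩ := hy
      have hyb : y ≤ b := le_trans hy2 hab
      have key : |deriv h y| ≤ M * (b - y) ^ m := by
        refine ih (deriv h) hdc M hM' s hsmono hz' b y (fun i => ⟨?_, ?_⟩) hyb
        · have : t 0 ≤ t i.castSucc := ht.monotone (Fin.zero_le _)
          exact le_of_lt (lt_of_le_of_lt (le_trans hy2 this) (hs_lt i).1)
        · exact le_of_lt (lt_of_lt_of_le (hs_lt i).2 (htx i.succ).2)
      refine le_trans key (mul_le_mul_of_nonneg_left (pow_le_pow_left₀ ?_ ?_ m) hM0)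
      · linarith
      · linarith
    -- FTC
    have hft : ∫ y in x..(t 0), deriv h y = h (t 0) - h x :=
      intervalIntegral.integral_deriv_eq_sub (fun y _ => hd y)
        ((hh.continuous_deriv (by exact_mod_cast le_top)).intervalIntegrable x (t 0))
    have hhx : h x = -(∫ y in x..(t 0), deriv h y) := by rw [hft, hz 0]; ring
    have hbd : ‖∫ y in x..(t 0), deriv h y‖ ≤ M * (b - x) ^ m * |t 0 - x| := by
      apply intervalIntegral.norm_integral_le_of_norm_le_const
      intro y hy
      exact (by simpa using hder_bd y (Set.uIoc_subset_uIcc hy) : |deriv h y| ≤ M * (b - x) ^ m)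
    rw [hhx, abs_neg]
    calc |∫ y in x..(t 0), deriv h y| ≤ M * (b - x) ^ m * |t 0 - x| := hbd
      _ ≤ M * (b - x) ^ m * (b - x) := by
          have h1 : (0:ℝ) ≤ M * (b - x) ^ m := mul_nonneg hM0 (pow_nonneg (by linarith) m)
          apply mul_le_mul_of_nonneg_left _ h1
          rw [abs_of_nonneg (by linarith)]; linarith
      _ = M * (b - x) ^ (m + 1) := by ring

/-- A smooth function with `f, f' ∈ L²` is bounded. -/
lemma sup_bound (f : ℝ → ℂ) (hf : ContDiff ℝ ∞ f)
    (h1 : Integrable (fun x : ℝ => ‖f x‖^2) volume)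
    (h2 : Integrable (fun x : ℝ => ‖deriv f x‖^2) volume) :
    ∃ M : ℝ, 0 < M ∧ ∀ x, ‖f x‖ ≤ M := by
  have hd : Differentiable ℝ f := hf.differentiable (by simp)
  have hdc : Continuous (deriv f) := hf.continuous_deriv (by exact_mod_cast le_top)
  set φ : ℝ → ℝ := fun y => (f y).re ^ 2 + (f y).im ^ 2 with hφdef
  set ψ : ℝ → ℝ := fun y =>
    2 * (f y).re * (deriv f y).re + 2 * (f y).im * (deriv f y).im with hψdef
  have hu : ∀ x, HasDerivAt (fun y => (f y).re) ((deriv f x).re) x := fun x =>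
    (Complex.reCLM.hasFDerivAt.comp_hasDerivAt x (hd x).hasDerivAt)
  have hv : ∀ x, HasDerivAt (fun y => (f y).im) ((deriv f x).im) x := fun x =>
    (Complex.imCLM.hasFDerivAt.comp_hasDerivAt x (hd x).hasDerivAt)
  have hφ : ∀ x, HasDerivAt φ (ψ x) x := by
    intro x
    have : HasDerivAt (fun y => (f y).re * (f y).re + (f y).im * (f y).im) _ x :=
      (((hu x).mul (hu x)).add ((hv x).mul (hv x)))
    convert this using 1 <;> [skip; ring]
    ext y; simp [hφdef]; ring
  have hnorm : ∀ y, ‖f y‖^2 = φ y := by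
    intro y
    show ‖f y‖^2 = (f y).re ^ 2 + (f y).im ^ 2
    rw [Complex.sq_norm, Complex.normSq_apply]; ring
  have hψbd : ∀ y, |ψ y| ≤ ‖f y‖^2 + ‖deriv f y‖^2 := by
    intro y
    simp only [hψdef]
    have e1 : ‖f y‖^2 = (f y).re^2 + (f y).im^2 := by
      rw [Complex.sq_norm, Complex.normSq_apply]; ring
    have e2 : ‖deriv f y‖^2 = (deriv f y).re^2 + (deriv f y).im^2 := by
      rw [Complex.sq_norm, Complex.normSq_apply]; ring
    rw [e1, e2, abs_le]
    constructor <;> nlinarith [sq_nonneg ((f y).re + (deriv f y).re),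
      sq_nonneg ((f y).re - (deriv f y).re), sq_nonneg ((f y).im + (deriv f y).im),
      sq_nonneg ((f y).im - (deriv f y).im)]
  have hψcont : Continuous ψ := by
    apply Continuous.add
    · exact ((continuous_const.mul (Complex.continuous_re.comp hf.continuous)).mul
        (Complex.continuous_re.comp hdc))
    · exact ((continuous_const.mul (Complex.continuous_im.comp hf.continuous)).mul
        (Complex.continuous_im.comp hdc))
  have hψint : Integrable ψ volume := by
    refine (h1.add h2).mono' hψcont.aestronglyMeasurable (ae_of_all _ fun y => ?_)
    simpa [Real.norm_eq_abs] using hψbd y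
  set M0 : ℝ := φ 0 + ∫ y, |ψ y| with hM0
  have hbd : ∀ x, φ x ≤ M0 := by
    intro x
    have hft : ∫ y in (0:ℝ)..x, ψ y = φ x - φ 0 :=
      intervalIntegral.integral_eq_sub_of_hasDerivAt (fun y _ => hφ y)
        (Integrable.intervalIntegrable hψint)
    have habs : |∫ y in (0:ℝ)..x, ψ y| ≤ ∫ y, |ψ y| := by
      rw [← Real.norm_eq_abs]
      calc ‖∫ y in (0:ℝ)..x, ψ y‖ ≤ ∫ y in Set.uIoc 0 x, ‖ψ y‖ :=
            intervalIntegral.norm_integral_le_integral_norm_uIoc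
        _ ≤ ∫ y, ‖ψ y‖ := setIntegral_le_integral hψint.norm
            (ae_of_all _ fun y => norm_nonneg _)
        _ = ∫ y, |ψ y| := by simp [Real.norm_eq_abs]
    have := abs_le.mp habs
    rw [hft] at this
    simp only [hM0]
    linarith [this.2]
  refine ⟨max 1 M0, lt_of_lt_of_le one_pos (le_max_left _ _), fun x => ?_⟩
  rcases le_total (‖f x‖) 1 with hx | hx
  · exact le_trans hx (le_max_left _ _)
  · refine le_trans ?_ (le_max_right _ _)
    have := hbd x
    rw [← hnorm x] at this
    nlinarith

lemma contDiff_iteratedDeriv' (f : ℝ → ℂ) (hf : ContDiff ℝ ∞ f) (n : ℕ) :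
    ContDiff ℝ ∞ (iteratedDeriv n f) := by
  rw [iteratedDeriv_eq_iterate]; exact hf.iterate_deriv n

lemma clm_comp_iteratedDeriv (L : ℂ →L[ℝ] ℝ) (f : ℝ → ℂ) (hf : ContDiff ℝ ∞ f) :
    ∀ (n : ℕ) (x : ℝ), iteratedDeriv n (fun y => L (f y)) x = L (iteratedDeriv n f x) := by
  intro n
  induction n with
  | zero => simp
  | succ n ih =>
    intro x
    rw [iteratedDeriv_succ, iteratedDeriv_succ]
    have hfe : iteratedDeriv n (fun z => L (f z)) = fun y => L (iteratedDeriv n f y) :=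
      funext ih
    rw [hfe]
    have hd : DifferentiableAt ℝ (iteratedDeriv n f) x :=
      ((contDiff_iteratedDeriv' f hf n).differentiable (by simp)) x
    exact (L.hasFDerivAt.comp_hasDerivAt x hd.hasDerivAt).deriv

/-- subadditivity of rpow for exponents in (0,1] -/
lemma rpow_sub_le_rpow_sub {A B : ℝ} (hB : 0 ≤ B) (hBA : B ≤ A) {p : ℝ}
    (hp0 : 0 ≤ p) (hp1 : p ≤ 1) : A ^ p - B ^ p ≤ (A - B) ^ p := by
  have key : ((B.toNNReal + (A - B).toNNReal) : ℝ≥0) ^ p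
      ≤ B.toNNReal ^ p + (A - B).toNNReal ^ p :=
    NNReal.rpow_add_le_add_rpow _ _ hp0 hp1
  have hAB : (0:ℝ) ≤ A - B := by linarith
  have hsum : B.toNNReal + (A - B).toNNReal = A.toNNReal := by
    rw [← Real.toNNReal_add hB hAB]; ring_nf
  rw [hsum] at key
  have := NNReal.coe_le_coe.2 key
  rw [NNReal.coe_add] at this
  simp only [NNReal.coe_rpow, Real.coe_toNNReal _ (hB.trans hBA),
    Real.coe_toNNReal _ hB, Real.coe_toNNReal _ hAB] at this
  linarith

lemma one_side (c α : ℝ) (hc : 0 < c) (hα0 : 0 < α) (hα1 : α ≤ 1) (h : ℝ → ℝ)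
    (hh : ContDiff ℝ ∞ h) (m : ℕ) (M : ℝ)
    (hM : ∀ y, |iteratedDeriv m h y| ≤ M)
    (hz : ∀ n : ℕ, h (c * Real.log (1 + (n : ℝ)) ^ α) = 0) :
    ∀ x : ℝ, 4 * c ≤ x →
      |h x| ≤ M * (2 * c * (m + 1)) ^ m * Real.exp (-(α * m / c) * x) := by
  intro x hx
  classical
  have hM0 : 0 ≤ M := le_trans (abs_nonneg _) (hM 0)
  have hx0 : 0 < x := by nlinarith
  set f : ℕ → ℝ := fun n => c * Real.log (1 + (n : ℝ)) ^ α with hfdef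
  have hlog_nonneg : ∀ n : ℕ, 0 ≤ Real.log (1 + (n : ℝ)) := fun n =>
    Real.log_nonneg (by simp)
  have fmono : ∀ {a b : ℕ}, a ≤ b → f a ≤ f b := by
    intro a b hab
    apply mul_le_mul_of_nonneg_left _ hc.le
    have hab' : (1:ℝ) + a ≤ 1 + b := by
      have : (a:ℝ) ≤ b := Nat.cast_le.2 hab
      linarith
    exact Real.rpow_le_rpow (hlog_nonneg a)
      (Real.log_le_log (by positivity) hab') hα0.le
  have fstrict : ∀ {a b : ℕ}, a < b → f a < f b := by
    intro a b hab
    apply mul_lt_mul_of_pos_left _ hc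
    apply Real.rpow_lt_rpow (hlog_nonneg a) _ hα0
    apply Real.log_lt_log (by positivity)
    have : (a:ℝ) < b := by exact_mod_cast hab
    linarith
  -- existence of a zero point beyond x
  have hP : ∃ n : ℕ, x ≤ f n := by
    set X := (x / c) ^ (α⁻¹) with hX
    have hX0 : 0 ≤ X := Real.rpow_nonneg (by positivity) _
    refine ⟨⌈Real.exp X⌉₊, ?_⟩
    have h1 : Real.exp X ≤ (⌈Real.exp X⌉₊ : ℝ) := Nat.le_ceil _
    have h2 : X ≤ Real.log (1 + (⌈Real.exp X⌉₊ : ℝ)) := by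
      calc X = Real.log (Real.exp X) := (Real.log_exp X).symm
        _ ≤ Real.log (1 + (⌈Real.exp X⌉₊ : ℝ)) :=
            Real.log_le_log (Real.exp_pos _) (by linarith)
    have h3 : (x / c) ≤ Real.log (1 + (⌈Real.exp X⌉₊ : ℝ)) ^ α := by
      have : X ^ α ≤ Real.log (1 + (⌈Real.exp X⌉₊ : ℝ)) ^ α :=
        Real.rpow_le_rpow hX0 h2 hα0.le
      refine le_trans (le_of_eq ?_) this
      rw [hX, ← Real.rpow_mul (by positivity), inv_mul_cancel₀ hα0.ne', Real.rpow_one]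
    calc x = c * (x / c) := by field_simp
      _ ≤ c * Real.log (1 + (⌈Real.exp X⌉₊ : ℝ)) ^ α := by
          exact mul_le_mul_of_nonneg_left h3 hc.le
  set n₀ := Nat.find hP with hn₀
  have h1 : x ≤ f n₀ := Nat.find_spec hP
  have hn₀pos : 0 < n₀ := by
    rcases Nat.eq_zero_or_pos n₀ with h0 | hp
    · exfalso
      rw [h0] at h1
      have : f 0 = 0 := by
        simp [hfdef, Real.log_one, Real.zero_rpow hα0.ne']
      rw [this] at h1; nlinarith
    · exact hp
  set k := n₀ - 1 with hkdef
  have hkn : n₀ = k + 1 := (Nat.succ_pred_eq_of_pos hn₀pos).symm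
  have h2 : f k < x := by
    have := Nat.find_min hP (show k < n₀ by omega)
    exact lt_of_not_ge this
  -- lower bound on n₀
  have hlogn₀ : x / c ≤ Real.log (1 + (n₀ : ℝ)) := by
    have h1' : x ≤ c * Real.log (1 + (n₀ : ℝ)) ^ α := h1
    have hLpow : x / c ≤ Real.log (1 + (n₀ : ℝ)) ^ α := by
      rw [div_le_iff₀ hc]; linarith
    have hxc1 : (1:ℝ) ≤ x / c := by rw [le_div_iff₀ hc]; nlinarith
    have hinv : (1:ℝ) ≤ α⁻¹ := by
      rw [le_inv_comm₀ one_pos hα0]; simpa using hα1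
    calc x / c = (x / c) ^ (1:ℝ) := (Real.rpow_one _).symm
      _ ≤ (x / c) ^ (α⁻¹) := Real.rpow_le_rpow_of_exponent_le hxc1 hinv
      _ ≤ (Real.log (1 + (n₀:ℝ)) ^ α) ^ (α⁻¹) :=
          Real.rpow_le_rpow (by positivity) hLpow (by positivity)
      _ = Real.log (1 + (n₀ : ℝ)) := by
          rw [← Real.rpow_mul (hlog_nonneg n₀), mul_inv_cancel₀ hα0.ne', Real.rpow_one]
  have hexpn₀ : Real.exp (x / c) ≤ 1 + (n₀ : ℝ) := by
    rw [← Real.exp_log (show (0:ℝ) < 1 + n₀ by positivity)]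
    exact Real.exp_le_exp.mpr hlogn₀
  have hexp2 : (2:ℝ) ≤ Real.exp (x / c) := by
    have h4 : (4:ℝ) ≤ x / c := by rw [le_div_iff₀ hc]; linarith
    have := Real.add_one_le_exp (x / c)
    linarith
  have hk1 : Real.exp (x / c) / 2 ≤ 1 + (k : ℝ) := by
    have : (n₀ : ℝ) = (k : ℝ) + 1 := by exact_mod_cast hkn
    linarith [hexpn₀]
  -- the zeros
  set t : Fin m → ℝ := fun i => f (n₀ + i) with htdef
  set b := f (n₀ + m) with hbdef
  have htmono : StrictMono t := fun i j hij => fstrict (by omega)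
  have htz : ∀ i, h (t i) = 0 := by
    intro i
    have := hz (n₀ + i)
    simpa [htdef, hfdef] using this
  have htx : ∀ i, x ≤ t i ∧ t i ≤ b := fun i =>
    ⟨le_trans h1 (fmono (Nat.le_add_right _ _)), fmono (by omega)⟩
  have hxb : x ≤ b := le_trans h1 (fmono (Nat.le_add_right _ _))
  -- bound on b - x
  set A := Real.log (1 + ((n₀ + m : ℕ) : ℝ)) with hAdef
  set B := Real.log (1 + (k : ℝ)) with hBdef
  have hBA : B ≤ A := by
    apply Real.log_le_log (by positivity)
    have : (k:ℝ) ≤ ((n₀ + m : ℕ) : ℝ) := by exact_mod_cast (by omega : k ≤ n₀ + m)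
    linarith
  have hB0 : 0 ≤ B := hlog_nonneg k
  have hsub : A ^ α - B ^ α ≤ (A - B) ^ α := rpow_sub_le_rpow_sub hB0 hBA hα0.le hα1
  have hABk : A - B ≤ (m + 1) / (1 + (k : ℝ)) := by
    have hkpos : (0:ℝ) < 1 + k := by positivity
    have hnum : (0:ℝ) < 1 + ((n₀ + m : ℕ) : ℝ) := by positivity
    have hlogdiv : A - B = Real.log ((1 + ((n₀ + m : ℕ) : ℝ)) / (1 + (k:ℝ))) := by
      rw [Real.log_div hnum.ne' hkpos.ne']
    rw [hlogdiv]
    have hq : (0:ℝ) < (1 + ((n₀ + m : ℕ) : ℝ)) / (1 + (k:ℝ)) := by positivity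
    refine le_trans (Real.log_le_sub_one_of_pos hq) ?_
    have hcast : ((n₀ + m : ℕ) : ℝ) = (k:ℝ) + 1 + m := by
      push_cast [hkn]; ring
    rw [hcast, div_sub_one hkpos.ne', div_le_div_iff₀ hkpos hkpos]
    ring_nf
    nlinarith [hkpos]
  have hAB0 : 0 ≤ A - B := by linarith
  -- bound b - x ≤ L
  set L := 2 * c * (m + 1) * Real.exp (-(α / c) * x) with hLdef
  have hbx : b - x ≤ L := by
    have e1 : b - x ≤ b - f k := by linarith [h2]
    have e2 : b - f k = c * (A ^ α - B ^ α) := by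
      simp only [hbdef, hfdef, hAdef, hBdef]; ring
    have e3 : (A - B) ^ α ≤ ((m + 1) / (1 + (k:ℝ))) ^ α :=
      Real.rpow_le_rpow hAB0 hABk hα0.le
    have hm1 : (1:ℝ) ≤ (m:ℝ) + 1 := by linarith [Nat.cast_nonneg (α := ℝ) m]
    have e4 : ((m + 1) / (1 + (k:ℝ))) ^ α = ((m:ℝ) + 1) ^ α / (1 + (k:ℝ)) ^ α :=
      Real.div_rpow (by positivity) (by positivity) α
    have e5 : ((m:ℝ) + 1) ^ α ≤ (m:ℝ) + 1 := by
      calc ((m:ℝ) + 1) ^ α ≤ ((m:ℝ) + 1) ^ (1:ℝ) :=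
            Real.rpow_le_rpow_of_exponent_le hm1 hα1
        _ = (m:ℝ) + 1 := Real.rpow_one _
    set E := Real.exp (x / c * α) / 2 ^ α with hEdef
    have hEpos : 0 < E := by positivity
    have e6 : E ≤ (1 + (k:ℝ)) ^ α := by
      calc E = (Real.exp (x / c) / 2) ^ α := by
            rw [hEdef, Real.div_rpow (Real.exp_pos _).le (by norm_num), ← Real.exp_mul]
        _ ≤ (1 + (k:ℝ)) ^ α := Real.rpow_le_rpow (by positivity) hk1 hα0.le
    have e7 : ((m:ℝ) + 1) ^ α / (1 + (k:ℝ)) ^ α ≤ ((m:ℝ) + 1) / E :=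
      div_le_div₀ (by positivity) e5 hEpos e6
    have e8 : ((m:ℝ) + 1) / E ≤ 2 * ((m:ℝ) + 1) * Real.exp (-(α / c) * x) := by
      rw [hEdef, div_div_eq_mul_div, div_le_iff₀ (Real.exp_pos _)]
      have h2a : (2:ℝ) ^ α ≤ 2 := by
        calc (2:ℝ) ^ α ≤ (2:ℝ) ^ (1:ℝ) :=
              Real.rpow_le_rpow_of_exponent_le one_le_two hα1
          _ = 2 := Real.rpow_one _
      have hee : Real.exp (-(α / c) * x) * Real.exp (x / c * α) = 1 := by
        rw [← Real.exp_add]; ring_nf; exact Real.exp_zero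
      calc ((m:ℝ) + 1) * 2 ^ α ≤ ((m:ℝ) + 1) * 2 := mul_le_mul_of_nonneg_left h2a (by linarith [Nat.cast_nonneg (α := ℝ) m])
        _ = 2 * ((m:ℝ) + 1) * (Real.exp (-(α / c) * x) * Real.exp (x / c * α)) := by
            rw [hee]; ring
        _ = 2 * ((m:ℝ) + 1) * Real.exp (-(α / c) * x) * Real.exp (x / c * α) := by ring
    calc b - x ≤ c * (A ^ α - B ^ α) := by rw [← e2]; exact e1
      _ ≤ c * ((m + 1) / E) := by
          apply mul_le_mul_of_nonneg_left _ hc.le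
          calc A ^ α - B ^ α ≤ (A - B) ^ α := hsub
            _ ≤ ((m + 1) / (1 + (k:ℝ))) ^ α := e3
            _ = ((m:ℝ) + 1) ^ α / (1 + (k:ℝ)) ^ α := e4
            _ ≤ ((m:ℝ) + 1) / E := e7
      _ ≤ c * (2 * ((m:ℝ) + 1) * Real.exp (-(α / c) * x)) :=
          mul_le_mul_of_nonneg_left e8 hc.le
      _ = L := by rw [hLdef]; ring
  -- conclude
  have hmain : |h x| ≤ M * (b - x) ^ m :=
    interp_bound m h hh M hM t htmono htz b x htx hxb
  have hL0 : 0 ≤ b - x := by linarith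
  have hpow : (b - x) ^ m ≤ L ^ m := pow_le_pow_left₀ hL0 hbx m
  have hLm : L ^ m = (2 * c * ((m:ℝ) + 1)) ^ m * Real.exp (-(α * m / c) * x) := by
    rw [hLdef, mul_pow, ← Real.exp_nat_mul]
    congr 1
    ring
  calc |h x| ≤ M * (b - x) ^ m := hmain
    _ ≤ M * L ^ m := mul_le_mul_of_nonneg_left hpow hM0
    _ = M * (2 * c * ((m:ℝ) + 1)) ^ m * Real.exp (-(α * m / c) * x) := by
        rw [hLm]; ring

theorem stmt11 (c α : ℝ) (hc : 0 < c) (hα : α ∈ Set.Ioc (0:ℝ) 1)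
    (g : ℝ → ℂ) (hg : ContDiff ℝ (⊤ : ℕ∞) g)
    (hint : ∀ k : ℕ, Integrable (fun x : ℝ => ‖iteratedDeriv k g x‖^2) volume)
    (hzero : ∀ n : ℕ, g (c * Real.log (1 + (n:ℝ)) ^ α) = 0 ∧
      g (-(c * Real.log (1 + (n:ℝ)) ^ α)) = 0) :
    ∀ N : ℝ, 0 < N → ∃ C : ℝ, 0 < C ∧ ∀ x : ℝ, ‖g x‖ ≤ C * Real.exp (-N * |x|) := by
  obtain ⟨hα0, hα1⟩ := hα
  intro N hN
  have hg' : ContDiff ℝ ∞ g := hg.of_le (by simp)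
  set m : ℕ := ⌈N * c / α⌉₊ + 1 with hmdef
  have hmN : N ≤ α * m / c := by
    have h1 : N * c / α ≤ (m : ℝ) := by
      have := Nat.le_ceil (N * c / α)
      have h2 : ((⌈N * c / α⌉₊ : ℕ) : ℝ) ≤ (m : ℝ) := by
        rw [hmdef]; push_cast; linarith
      linarith
    rw [div_le_iff₀ hα0] at h1
    rw [le_div_iff₀ hc]
    nlinarith
  -- uniform bound on the m-th derivative of g
  obtain ⟨M, hMpos, hM⟩ : ∃ M : ℝ, 0 < M ∧ ∀ x, ‖iteratedDeriv m g x‖ ≤ M := by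
    have h2 := hint (m + 1)
    rw [iteratedDeriv_succ] at h2
    exact sup_bound (iteratedDeriv m g) (contDiff_iteratedDeriv' g hg' m) (hint m) h2
  have hre : ∀ (f : ℝ → ℂ), ContDiff ℝ ∞ f → ∀ (n : ℕ) (x : ℝ),
      iteratedDeriv n (fun y => (f y).re) x = (iteratedDeriv n f x).re := by
    intro f hf n x
    simpa using clm_comp_iteratedDeriv Complex.reCLM f hf n x
  have him : ∀ (f : ℝ → ℂ), ContDiff ℝ ∞ f → ∀ (n : ℕ) (x : ℝ),
      iteratedDeriv n (fun y => (f y).im) x = (iteratedDeriv n f x).im := by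
    intro f hf n x
    simpa using clm_comp_iteratedDeriv Complex.imCLM f hf n x
  have hgneg : ContDiff ℝ ∞ (fun y : ℝ => g (-y)) := hg'.comp contDiff_neg
  -- bounds on iterated derivatives of the four real components
  have hbd1 : ∀ y, |iteratedDeriv m (fun z => (g z).re) y| ≤ M := by
    intro y; rw [hre g hg' m y]
    exact le_trans (Complex.abs_re_le_norm _) (by exact hM y)
  have hbd2 : ∀ y, |iteratedDeriv m (fun z => (g z).im) y| ≤ M := by
    intro y; rw [him g hg' m y]
    exact le_trans (Complex.abs_im_le_norm _) (by exact hM y)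
  have hnegbd : ∀ y, ‖iteratedDeriv m (fun z => g (-z)) y‖ ≤ M := by
    intro y
    rw [iteratedDeriv_comp_neg m g y, norm_smul]
    have : ‖(-1 : ℝ) ^ m‖ = 1 := by
      rw [norm_pow, norm_neg, norm_one, one_pow]
    rw [this, one_mul]
    exact hM (-y)
  have hbd3 : ∀ y, |iteratedDeriv m (fun z => (g (-z)).re) y| ≤ M := by
    intro y; rw [hre _ hgneg m y]
    exact le_trans (Complex.abs_re_le_norm _) (by exact hnegbd y)
  have hbd4 : ∀ y, |iteratedDeriv m (fun z => (g (-z)).im) y| ≤ M := by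
    intro y; rw [him _ hgneg m y]
    exact le_trans (Complex.abs_im_le_norm _) (by exact hnegbd y)
  -- zeros
  have hz1 : ∀ n : ℕ, (fun z => (g z).re) (c * Real.log (1 + (n:ℝ)) ^ α) = 0 := by
    intro n; simp [(hzero n).1]
  have hz2 : ∀ n : ℕ, (fun z => (g z).im) (c * Real.log (1 + (n:ℝ)) ^ α) = 0 := by
    intro n; simp [(hzero n).1]
  have hz3 : ∀ n : ℕ, (fun z => (g (-z)).re) (c * Real.log (1 + (n:ℝ)) ^ α) = 0 := by
    intro n; simp [(hzero n).2]
  have hz4 : ∀ n : ℕ, (fun z => (g (-z)).im) (c * Real.log (1 + (n:ℝ)) ^ α) = 0 := by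
    intro n; simp [(hzero n).2]
  have hcr : ContDiff ℝ ∞ (fun z => (g z).re) := Complex.reCLM.contDiff.comp hg'
  have hci : ContDiff ℝ ∞ (fun z => (g z).im) := Complex.imCLM.contDiff.comp hg'
  have hcr' : ContDiff ℝ ∞ (fun z => (g (-z)).re) := Complex.reCLM.contDiff.comp hgneg
  have hci' : ContDiff ℝ ∞ (fun z => (g (-z)).im) := Complex.imCLM.contDiff.comp hgneg
  set K := M * (2 * c * ((m:ℝ) + 1)) ^ m with hKdef
  have hKpos : 0 < K := by positivity
  have hO1 := one_side c α hc hα0 hα1 _ hcr m M hbd1 hz1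
  have hO2 := one_side c α hc hα0 hα1 _ hci m M hbd2 hz2
  have hO3 := one_side c α hc hα0 hα1 _ hcr' m M hbd3 hz3
  have hO4 := one_side c α hc hα0 hα1 _ hci' m M hbd4 hz4
  -- far field bound
  have hfar : ∀ x : ℝ, 4 * c ≤ |x| → ‖g x‖ ≤ 2 * K * Real.exp (-N * |x|) := by
    intro x hx
    have hexple : Real.exp (-(α * m / c) * |x|) ≤ Real.exp (-N * |x|) := by
      apply Real.exp_le_exp.mpr
      have hxpos : (0:ℝ) ≤ |x| := abs_nonneg x
      nlinarith
    have key : |(g x).re| + |(g x).im| ≤ 2 * K * Real.exp (-(α * m / c) * |x|) := by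
      rcases le_total 0 x with hx0 | hx0
      · have hxx : 4 * c ≤ x := by rwa [abs_of_nonneg hx0] at hx
        have e1 := hO1 x hxx
        have e2 := hO2 x hxx
        rw [← hKdef] at e1 e2
        rw [abs_of_nonneg hx0]
        linarith
      · have hxn : 4 * c ≤ -x := by rwa [abs_of_nonpos hx0] at hx
        have e3 := hO3 (-x) hxn
        have e4 := hO4 (-x) hxn
        simp only [neg_neg] at e3 e4
        rw [← hKdef] at e3 e4
        rw [abs_of_nonpos hx0]
        linarith
    have habs : ‖g x‖ ≤ |(g x).re| + |(g x).im| := by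
      exact Complex.norm_le_abs_re_add_abs_im _
    calc ‖g x‖ ≤ |(g x).re| + |(g x).im| := habs
      _ ≤ 2 * K * Real.exp (-(α * m / c) * |x|) := key
      _ ≤ 2 * K * Real.exp (-N * |x|) := by nlinarith
  -- near field bound
  obtain ⟨S, hS⟩ := (isCompact_Icc (a := -(4*c)) (b := 4*c)).exists_bound_of_continuousOn
    hg'.continuous.continuousOn
  set C2 := (max S 0 + 1) * Real.exp (N * (4 * c)) with hC2def
  have hC2pos : 0 < C2 := by positivity
  refine ⟨2 * K + C2, by positivity, fun x => ?_⟩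
  rcases le_total (4 * c) |x| with hx | hx
  · have := hfar x hx
    have hexp : 0 < Real.exp (-N * |x|) := Real.exp_pos _
    nlinarith
  · have hmem : x ∈ Set.Icc (-(4*c)) (4*c) := by
      constructor <;> [linarith [neg_abs_le x]; linarith [le_abs_self x]]
    have h1 : ‖g x‖ ≤ max S 0 := le_trans (hS x hmem) (le_max_left _ _)
    have h2 : Real.exp (N * (4 * c)) * Real.exp (-N * |x|) ≥ 1 := by
      rw [← Real.exp_add]
      apply Real.one_le_exp
      have : 0 ≤ N * (4 * c - |x|) := mul_nonneg hN.le (by linarith)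
      nlinarith [abs_nonneg x]
    have hexp : 0 < Real.exp (-N * |x|) := Real.exp_pos _
    calc ‖g x‖ ≤ max S 0 := h1
      _ ≤ (max S 0 + 1) * (Real.exp (N * (4 * c)) * Real.exp (-N * |x|)) := by
          nlinarith [le_max_right S 0]
      _ = C2 * Real.exp (-N * |x|) := by rw [hC2def]; ring
      _ ≤ (2 * K + C2) * Real.exp (-N * |x|) := by nlinarith
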